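/- The orbit space ℝP⁵/ℤ₂⁴ of the ℤ₂⁴-action on ℝP⁵ given by the composition of the second symmetric power ℤ₂⁴ ⊂ ℤ₂⁶ with the standard ℤ₂⁶-action is homeomorphic to the quotient space (Δ₄,₂ × ℝP²)/≈, where (x, c) ≈ (y, c′) if and only if (x, c) = (y, c′), or x = y and x ∈ ∂Δ₄,₂. -/

import Mathlib

/-!
The orbit map sends `[w]` to the point of `Δ₄,₂` whose `j`-th coordinate is the normalized sum
of the `w_k²` over the 2-subsets `k ∋ j` (a moment map), together with `[w₀w₅ : w₁w₄ : w₂w₃]`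
in `ℝP²`; these products all vanish exactly over `∂Δ₄,₂`.

For a unit vector and each complementary pair `(a, b)` of coordinates,
`a² + b² = √((a² - b²)² + (2ab)²)`, where `a² - b²` is an affine function of the octahedron point
and the three products `ab` are known from the `ℝP²` point up to a common factor `t`. The three
square roots add up to `1` and their sum is strictly increasing in `t²`, so `t = ±1`; this fixes
`w` up to signs, and the admissible sign patterns form one `ℤ₂⁴`-orbit. Conversely, `t` is found
by the intermediate value theorem and each pair `(a, b)` as a complex square root of
`(a² - b²) + 2abi`, which gives surjectivity. The orbit space is compact and the glued space is
Hausdorff, since `(x, [v]) ↦ (x, ∏ⱼ xⱼ(1 - xⱼ) · vvᵀ/|v|²)` embeds it, so the continuous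
bijection is a homeomorphism.
-/

/-- Proportionality of nonzero vectors of `ℝ⁶`: the relation defining `ℝP⁵`. -/
def projRelR (x y : {w : Fin 6 → ℝ // w ≠ 0}) : Prop :=
  ∃ c : ℝ, c ≠ 0 ∧ (fun k => c * x.1 k) = y.1

/-- `ℝP⁵`, with the quotient topology. -/
abbrev RP5 := Quot projRelR

/-- Proportionality of nonzero vectors of `ℝ³`: the relation defining `ℝP²`. -/
def projRelR2 (x y : {w : Fin 3 → ℝ // w ≠ 0}) : Prop :=
  ∃ c : ℝ, c ≠ 0 ∧ (fun k => c * x.1 k) = y.1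

/-- `ℝP²`, with the quotient topology. -/
abbrev RP2 := Quot projRelR2

/-- The weights of the `ℤ₂⁴`-action on `ℝP⁵` given by the composition of the second
symmetric power `ℤ₂⁴ ⊂ ℤ₂⁶` with the standard `ℤ₂⁶`-action:
`ε·[w] = [ε₁ε₂w₀ : ε₁ε₃w₁ : ε₁ε₄w₂ : ε₂ε₃w₃ : ε₂ε₄w₄ : ε₃ε₄w₅]`. -/
def signCoef (ε : Fin 4 → ℝ) : Fin 6 → ℝ :=
  ![ε 0 * ε 1, ε 0 * ε 2, ε 0 * ε 3, ε 1 * ε 2, ε 1 * ε 3, ε 2 * ε 3]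

/-- Two points of `ℝP⁵` lie in the same orbit of the group `ℤ₂⁴ = {−1,1}⁴`. -/
def realOrbitRel (p q : RP5) : Prop :=
  ∃ ε : Fin 4 → ℝ, (∀ i, ε i = 1 ∨ ε i = -1) ∧
    ∃ w w' : {w : Fin 6 → ℝ // w ≠ 0},
      Quot.mk projRelR w = p ∧ Quot.mk projRelR w' = q ∧
      ∀ k : Fin 6, w'.1 k = signCoef ε k * w.1 k

/-- The hypersimplex (octahedron) `Δ₄,₂ = {x ∈ ℝ⁴ : 0 ≤ xᵢ ≤ 1, Σxᵢ = 2}`. -/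
def hypersimplex : Set (Fin 4 → ℝ) :=
  {x | (∀ i, 0 ≤ x i ∧ x i ≤ 1) ∧ x 0 + x 1 + x 2 + x 3 = 2}

/-- The boundary `∂Δ₄,₂`: points of `Δ₄,₂` having some coordinate equal to `0` or `1`. -/
def hypersimplexBoundary : Set (Fin 4 → ℝ) :=
  {x | x ∈ hypersimplex ∧ ∃ i, x i = 0 ∨ x i = 1}

/-- The gluing relation on `Δ₄,₂ × ℝP²`: `(x,c) ≈ (y,c′)` iff `(x,c) = (y,c′)` or
(`x = y` and `x ∈ ∂Δ₄,₂`). -/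
def glueRel (p q : ↥hypersimplex × RP2) : Prop :=
  p = q ∨ (p.1 = q.1 ∧ (p.1 : Fin 4 → ℝ) ∈ hypersimplexBoundary)

open Finset Topology

namespace RP5Orbit

noncomputable section

section Projective

variable {ι : Type*}

/-- `projRelR` and `projRelR2` are this relation for `ι = Fin 6` and `ι = Fin 3`. -/
def Proportional (x y : {w : ι → ℝ // w ≠ 0}) : Prop :=
  ∃ c : ℝ, c ≠ 0 ∧ (fun k => c * x.1 k) = y.1

theorem proportional_equivalence : Equivalence (Proportional (ι := ι)) where
  refl _ := ⟨1, one_ne_zero, by simp⟩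
  symm := by
    rintro x y ⟨c, hc, h⟩
    refine ⟨c⁻¹, inv_ne_zero hc, funext fun k => ?_⟩
    rw [← h]
    field_simp
  trans := by
    rintro x y z ⟨c, hc, h⟩ ⟨c', hc', h'⟩
    refine ⟨c' * c, mul_ne_zero hc' hc, funext fun k => ?_⟩
    rw [← h', ← h, mul_assoc]

theorem compactSpace_quot_proportional [Fintype ι] :
    CompactSpace (Quot (Proportional (ι := ι))) := by
  have : CompactSpace (Metric.sphere (0 : ι → ℝ) 1) :=
    isCompact_iff_compactSpace.mp (isCompact_sphere 0 1)
  let toNonzero : Metric.sphere (0 : ι → ℝ) 1 → {w : ι → ℝ // w ≠ 0} :=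
    fun v => ⟨v, ne_zero_of_mem_unit_sphere v⟩
  refine Function.Surjective.compactSpace (f := Quot.mk _ ∘ toNonzero)
    (continuous_quot_mk.comp (by fun_prop)) ?_
  rintro ⟨⟨w, hw⟩⟩
  refine ⟨⟨‖w‖⁻¹ • w, by simpa using norm_smul_inv_norm (𝕜 := ℝ) hw⟩, Quot.sound ?_⟩
  refine ⟨‖w‖, norm_ne_zero_iff.mpr hw, funext fun k => ?_⟩
  simp [toNonzero, norm_ne_zero_iff.mpr hw]

variable [Fintype ι]

def normSq (w : ι → ℝ) : ℝ := ∑ k, w k ^ 2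

theorem normSq_pos {w : ι → ℝ} (hw : w ≠ 0) : 0 < normSq w := by
  obtain ⟨k, hk⟩ : ∃ k, w k ≠ 0 := Function.ne_iff.mp hw
  exact Finset.sum_pos' (fun _ _ => sq_nonneg _) ⟨k, mem_univ k, by positivity⟩

theorem continuous_normSq : Continuous (normSq (ι := ι)) :=
  continuous_finsetSum _ fun k _ => (continuous_apply k).pow 2

theorem normSq_mul (c : ℝ) (w : ι → ℝ) : normSq (fun k => c * w k) = c ^ 2 * normSq w := by
  simp only [normSq, mul_pow, mul_sum]

theorem exists_proportional_normSq_eq_one (a : {w : ι → ℝ // w ≠ 0}) :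
    ∃ u : {w : ι → ℝ // w ≠ 0}, normSq u.1 = 1 ∧ Proportional u a := by
  have hN := normSq_pos a.2
  set r := √(normSq a.1)
  have hr : r ≠ 0 := (Real.sqrt_pos.mpr hN).ne'
  refine ⟨⟨fun k => r⁻¹ * a.1 k, fun h => a.2 (funext fun k => ?_)⟩, ?_, r, hr, ?_⟩
  · simpa [hr] using congrFun h k
  · rw [normSq_mul, inv_pow, Real.sq_sqrt hN.le, inv_mul_cancel₀ hN.ne']
  · funext k
    simp [hr]

def outerNormalized (w : ι → ℝ) (i j : ι) : ℝ := w i * w j / normSq w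

theorem outerNormalized_mul {c : ℝ} (hc : c ≠ 0) (w : ι → ℝ) :
    outerNormalized (fun k => c * w k) = outerNormalized w := by
  funext i j
  simp only [outerNormalized, normSq_mul]
  rw [show c * w i * (c * w j) = c ^ 2 * (w i * w j) by ring,
    mul_div_mul_left _ _ (pow_ne_zero 2 hc)]

theorem proportional_of_outerNormalized_eq {x y : {w : ι → ℝ // w ≠ 0}}
    (h : outerNormalized x.1 = outerNormalized y.1) : Proportional x y := by
  have hNx := (normSq_pos x.2).ne'
  have hNy := (normSq_pos y.2).ne'
  obtain ⟨i, hi⟩ : ∃ i, x.1 i ≠ 0 := Function.ne_iff.mp x.2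
  have hii := congrFun (congrFun h i) i
  have hyi : y.1 i ≠ 0 := by
    rintro hyi
    simp [outerNormalized, hyi, hNx] at hii
    exact hi hii
  refine ⟨normSq y.1 * x.1 i / (normSq x.1 * y.1 i),
    div_ne_zero (mul_ne_zero hNy hi) (mul_ne_zero hNx hyi), funext fun k => ?_⟩
  have hik := congrFun (congrFun h i) k
  simp only [outerNormalized] at hik
  field_simp at hik ⊢
  linear_combination hik

def projOuter : Quot (Proportional (ι := ι)) → ι → ι → ℝ :=
  Quot.lift (fun x => outerNormalized x.1) fun _ _ ⟨_, hc, h⟩ => by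
    simp only [← h, outerNormalized_mul hc]

theorem continuous_projOuter : Continuous (projOuter (ι := ι)) := by
  have hc (k : ι) : Continuous fun x : {w : ι → ℝ // w ≠ 0} => x.1 k :=
    (continuous_apply k).comp continuous_subtype_val
  refine continuous_quot_lift _ (continuous_pi fun i => continuous_pi fun j => ?_)
  exact ((hc i).mul (hc j)).div (continuous_normSq.comp continuous_subtype_val)
    fun x => (normSq_pos x.2).ne'

theorem projOuter_injective : Function.Injective (projOuter (ι := ι)) := by
  rintro ⟨x⟩ ⟨y⟩ h
  exact Quot.sound (proportional_of_outerNormalized_eq h)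

end Projective

theorem continuousAt_quot_mk_of_collapsed {Z Y K : Type*} [TopologicalSpace Z]
    [TopologicalSpace Y] [TopologicalSpace K] [CompactSpace K] {r : Y × K → Y × K → Prop}
    {f : Z → Y} {z : Z} (hf : ContinuousAt f z) (g : Z → K)
    (hcollapse : ∀ k, Quot.mk r (f z, k) = Quot.mk r (f z, g z)) :
    ContinuousAt (fun z => Quot.mk r (f z, g z)) z := by
  refine (nhds_basis_opens _).tendsto_right_iff.mpr fun U ⟨hzU, hU⟩ => ?_
  have hopen : IsOpen (Quot.mk r ⁻¹' U) := hU.preimage continuous_quot_mk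
  have htube : ∀ᶠ y in 𝓝 (f z), ∀ k ∈ (Set.univ : Set K), Quot.mk r (y, k) ∈ U :=
    isCompact_univ.eventually_forall_of_forall_eventually fun k _ =>
      hopen.mem_nhds (show Quot.mk r (f z, k) ∈ U by rwa [hcollapse k])
  filter_upwards [hf.eventually htube] with z' hz' using hz' _ trivial

section SumSqrt

variable {ι : Type*} [Fintype ι]

theorem sum_sqrt_lt_of_sq_lt {d e : ι → ℝ} (he : e ≠ 0) {a b : ℝ} (hab : a ^ 2 < b ^ 2) :
    ∑ i, √(d i ^ 2 + (a * e i) ^ 2) < ∑ i, √(d i ^ 2 + (b * e i) ^ 2) := by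
  obtain ⟨i, hi⟩ : ∃ i, e i ≠ 0 := Function.ne_iff.mp he
  have hei : 0 < e i ^ 2 := by positivity
  refine Finset.sum_lt_sum (fun j _ => Real.sqrt_le_sqrt ?_) ⟨i, mem_univ i, ?_⟩
  · nlinarith [sq_nonneg (e j)]
  · exact Real.sqrt_lt_sqrt (by positivity) (by nlinarith)

theorem sq_eq_one_or_eq_zero_of_sum_sqrt_eq {d e : ι → ℝ} {μ : ℝ}
    (h : ∑ i, √(d i ^ 2 + (μ * e i) ^ 2) = ∑ i, √(d i ^ 2 + e i ^ 2)) :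
    μ ^ 2 = 1 ∨ e = 0 := by
  by_contra! hcon
  obtain ⟨hμ, he⟩ := hcon
  rcases hμ.lt_or_gt with hlt | hgt
  · have := sum_sqrt_lt_of_sq_lt (d := d) he (b := 1) (by simpa using hlt)
    simp only [one_mul] at this
    exact this.ne h
  · have := sum_sqrt_lt_of_sq_lt (d := d) he (a := 1) (by simpa using hgt)
    simp only [one_mul] at this
    exact this.ne' h

theorem sum_abs_eq_sum_sqrt_iff {d e : ι → ℝ} :
    ∑ i, |d i| = ∑ i, √(d i ^ 2 + e i ^ 2) ↔ e = 0 := by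
  simp_rw [← Real.sqrt_sq_eq_abs]
  rw [Finset.sum_eq_sum_iff_of_le fun i _ => Real.sqrt_le_sqrt (by nlinarith [sq_nonneg (e i)])]
  simp only [mem_univ, forall_const, funext_iff, Pi.zero_apply]
  refine forall_congr' fun i => ?_
  rw [Real.sqrt_inj (sq_nonneg _) (by positivity)]
  simp

theorem exists_sum_sqrt_eq_one {d e : ι → ℝ} (he : e ≠ 0) (hd : ∑ i, |d i| ≤ 1) :
    ∃ t, ∑ i, √(d i ^ 2 + (t * e i) ^ 2) = 1 := by
  obtain ⟨i, hi⟩ : ∃ i, e i ≠ 0 := Function.ne_iff.mp he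
  set f : ℝ → ℝ := fun t => ∑ i, √(d i ^ 2 + (t * e i) ^ 2)
  have hf0 : f 0 ≤ 1 := by simpa [f, Real.sqrt_sq_eq_abs] using hd
  have hfT : 1 ≤ f |e i|⁻¹ := calc
    1 = |(|e i|⁻¹ * e i)| := by simp [abs_mul, inv_mul_cancel₀ (abs_ne_zero.mpr hi)]
    _ ≤ √(d i ^ 2 + (|e i|⁻¹ * e i) ^ 2) := Real.abs_le_sqrt (by nlinarith [sq_nonneg (d i)])
    _ ≤ f |e i|⁻¹ := Finset.single_le_sum (f := fun j => √(d j ^ 2 + (|e i|⁻¹ * e j) ^ 2))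
          (fun _ _ => Real.sqrt_nonneg _) (mem_univ i)
  obtain ⟨t, -, ht⟩ := intermediate_value_Icc (by positivity) (by fun_prop : Continuous f).continuousOn
    ⟨hf0, hfT⟩
  exact ⟨t, ht⟩

end SumSqrt

theorem sq_add_sq_eq_sqrt (a b : ℝ) :
    a ^ 2 + b ^ 2 = √((a ^ 2 - b ^ 2) ^ 2 + (2 * (a * b)) ^ 2) := by
  rw [show (a ^ 2 - b ^ 2) ^ 2 + (2 * (a * b)) ^ 2 = (a ^ 2 + b ^ 2) ^ 2 by ring,
    Real.sqrt_sq (by positivity)]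

theorem exists_sq_sub_sq_eq_and_two_mul_eq (d e : ℝ) :
    ∃ a b : ℝ, a ^ 2 - b ^ 2 = d ∧ 2 * (a * b) = e := by
  obtain ⟨z, hz⟩ := IsAlgClosed.exists_pow_nat_eq (⟨d, e⟩ : ℂ) two_pos
  refine ⟨z.re, z.im, ?_, ?_⟩
  · simpa [sq] using congrArg Complex.re hz
  · have him := congrArg Complex.im hz
    simp only [sq, Complex.mul_im] at him
    linarith

/-- Coordinate `k` of `ℝ⁶` belongs to the `k`-th 2-subset of `{0,1,2,3}` in the order
`01, 02, 03, 12, 13, 23`; `pairLo i = {0, i+1}` and `pairHi i` is its complement. -/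
def pairLo : Fin 3 → Fin 6 := ![0, 1, 2]

def pairHi : Fin 3 → Fin 6 := ![5, 4, 3]

def pairProd (w : Fin 6 → ℝ) (i : Fin 3) : ℝ := w (pairLo i) * w (pairHi i)

def pairDiff (w : Fin 6 → ℝ) (i : Fin 3) : ℝ := w (pairLo i) ^ 2 - w (pairHi i) ^ 2

def momentMap (w : Fin 6 → ℝ) (j : Fin 4) : ℝ :=
  ![w 0 ^ 2 + w 1 ^ 2 + w 2 ^ 2, w 0 ^ 2 + w 3 ^ 2 + w 4 ^ 2,
    w 1 ^ 2 + w 3 ^ 2 + w 5 ^ 2, w 2 ^ 2 + w 4 ^ 2 + w 5 ^ 2] j / normSq w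

def octaDiff (x : Fin 4 → ℝ) : Fin 3 → ℝ := ![x 0 + x 1 - 1, x 0 + x 2 - 1, x 0 + x 3 - 1]

theorem normSq_fin_six (w : Fin 6 → ℝ) :
    normSq w = w 0 ^ 2 + w 1 ^ 2 + w 2 ^ 2 + w 3 ^ 2 + w 4 ^ 2 + w 5 ^ 2 := by
  simp [normSq, Fin.sum_univ_six]

theorem normSq_eq_sum_sqrt (w : Fin 6 → ℝ) :
    normSq w = ∑ i, √(pairDiff w i ^ 2 + (2 * pairProd w i) ^ 2) := by
  simp only [pairDiff, pairProd, ← sq_add_sq_eq_sqrt, normSq_fin_six, Fin.sum_univ_three]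
  simp only [pairLo, pairHi, Matrix.cons_val]
  ring

theorem momentMap_mem {w : Fin 6 → ℝ} (hw : w ≠ 0) : momentMap w ∈ hypersimplex := by
  have hN := normSq_pos hw
  have hN6 := normSq_fin_six w
  refine ⟨fun j => ⟨div_nonneg ?_ hN.le, (div_le_one hN).mpr ?_⟩, ?_⟩
  · fin_cases j <;> simp <;> positivity
  · fin_cases j <;> simp <;> nlinarith [sq_nonneg (w 0), sq_nonneg (w 1), sq_nonneg (w 2),
      sq_nonneg (w 3), sq_nonneg (w 4), sq_nonneg (w 5)]
  · simp only [momentMap, Matrix.cons_val]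
    field_simp
    rw [hN6]
    ring

theorem octaDiff_momentMap {w : Fin 6 → ℝ} (hw : w ≠ 0) (i : Fin 3) :
    octaDiff (momentMap w) i = pairDiff w i / normSq w := by
  have hN := (normSq_pos hw).ne'
  rw [eq_div_iff hN]
  fin_cases i <;> simp [octaDiff, momentMap, pairDiff, pairLo, pairHi, add_mul, sub_mul,
    div_mul_cancel₀ _ hN] <;> rw [normSq_fin_six] <;> ring

theorem eq_of_octaDiff_eq {x y : Fin 4 → ℝ} (hx : x 0 + x 1 + x 2 + x 3 = 2)
    (hy : y 0 + y 1 + y 2 + y 3 = 2) (h : octaDiff x = octaDiff y) : x = y := by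
  have h0 := congrFun h 0
  have h1 := congrFun h 1
  have h2 := congrFun h 2
  simp only [octaDiff, Matrix.cons_val] at h0 h1 h2
  funext j
  fin_cases j <;> simp <;> linarith

theorem momentMap_eq_of_sq_eq {w w' : Fin 6 → ℝ} {c : ℝ} (hc : c ≠ 0)
    (h : ∀ k, w' k ^ 2 = c ^ 2 * w k ^ 2) : momentMap w' = momentMap w := by
  have hN : normSq w' = c ^ 2 * normSq w := by simp [normSq, h, mul_sum]
  funext j
  fin_cases j <;> simp only [momentMap, hN, h, ← mul_add] <;>
    exact mul_div_mul_left _ _ (pow_ne_zero 2 hc)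

theorem signCoef_sq {ε : Fin 4 → ℝ} (hε : ∀ i, ε i = 1 ∨ ε i = -1) (k : Fin 6) :
    signCoef ε k ^ 2 = 1 := by
  have h i : ε i ^ 2 = 1 := sq_eq_one_iff.mpr (hε i)
  fin_cases k <;> simp [signCoef, mul_pow, h]

@[simp]
theorem signCoef_one : signCoef 1 = 1 := by
  funext k
  fin_cases k <;> simp [signCoef]

theorem pairProd_eq_of_signCoef {w w' : Fin 6 → ℝ} {c : ℝ} {ε : Fin 4 → ℝ}
    (h : ∀ k, w' k = c * (signCoef ε k * w k)) (i : Fin 3) :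
    pairProd w' i = c ^ 2 * (ε 0 * ε 1 * ε 2 * ε 3) * pairProd w i := by
  fin_cases i <;> simp [pairProd, pairLo, pairHi, h, signCoef] <;> ring

theorem sum_abs_octaDiff_lt {x : Fin 4 → ℝ} (hx : x ∈ hypersimplex)
    (hbd : x ∉ hypersimplexBoundary) : ∑ i, |octaDiff x i| < 1 := by
  have h j : 0 < x j ∧ x j < 1 :=
    ⟨(hx.1 j).1.lt_of_ne' fun h0 => hbd ⟨hx, j, .inl h0⟩,
      (hx.1 j).2.lt_of_ne fun h1 => hbd ⟨hx, j, .inr h1⟩⟩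
  have hs := hx.2
  have := h 0; have := h 1; have := h 2; have := h 3
  simp only [Fin.sum_univ_three, octaDiff, Matrix.cons_val]
  rcases abs_cases (x 0 + x 1 - 1) with ⟨e1, _⟩ | ⟨e1, _⟩ <;>
    rcases abs_cases (x 0 + x 2 - 1) with ⟨e2, _⟩ | ⟨e2, _⟩ <;>
      rcases abs_cases (x 0 + x 3 - 1) with ⟨e3, _⟩ | ⟨e3, _⟩ <;> linarith

theorem sum_abs_octaDiff_eq_one {x : Fin 4 → ℝ} (hx : x ∈ hypersimplexBoundary) :
    ∑ i, |octaDiff x i| = 1 := by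
  obtain ⟨⟨hb, hs⟩, j, hj⟩ := hx
  have := hb 0; have := hb 1; have := hb 2; have := hb 3
  simp only [Fin.sum_univ_three, octaDiff, Matrix.cons_val]
  fin_cases j <;> simp only [Fin.zero_eta, Fin.mk_one, Fin.reduceFinMk] at hj <;>
    rcases hj with hj | hj <;>
    rcases abs_cases (x 0 + x 1 - 1) with ⟨e1, _⟩ | ⟨e1, _⟩ <;>
    rcases abs_cases (x 0 + x 2 - 1) with ⟨e2, _⟩ | ⟨e2, _⟩ <;>
    rcases abs_cases (x 0 + x 3 - 1) with ⟨e3, _⟩ | ⟨e3, _⟩ <;> linarith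

theorem mem_hypersimplexBoundary_iff {x : Fin 4 → ℝ} (hx : x ∈ hypersimplex) :
    x ∈ hypersimplexBoundary ↔ ∑ i, |octaDiff x i| = 1 := by
  exact ⟨sum_abs_octaDiff_eq_one, fun h => by_contra fun hbd => (sum_abs_octaDiff_lt hx hbd).ne h⟩

theorem sum_abs_octaDiff_le {x : Fin 4 → ℝ} (hx : x ∈ hypersimplex) :
    ∑ i, |octaDiff x i| ≤ 1 := by
  by_cases hbd : x ∈ hypersimplexBoundary
  · exact (sum_abs_octaDiff_eq_one hbd).le
  · exact (sum_abs_octaDiff_lt hx hbd).le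

theorem momentMap_mem_hypersimplexBoundary_iff {w : Fin 6 → ℝ} (hw : w ≠ 0) :
    momentMap w ∈ hypersimplexBoundary ↔ pairProd w = 0 := by
  have hN := normSq_pos hw
  rw [mem_hypersimplexBoundary_iff (momentMap_mem hw)]
  simp only [octaDiff_momentMap hw, abs_div, abs_of_pos hN, ← sum_div, div_eq_one_iff_eq hN.ne']
  rw [normSq_eq_sum_sqrt]
  refine (sum_abs_eq_sum_sqrt_iff (e := fun i => 2 * pairProd w i)).trans ?_
  simp [funext_iff]

theorem sq_eq_sq_of_sq_sub_sq_eq {a b a' b' : ℝ} (hd : a' ^ 2 - b' ^ 2 = a ^ 2 - b ^ 2)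
    (hp : (a' * b') ^ 2 = (a * b) ^ 2) : a' ^ 2 = a ^ 2 ∧ b' ^ 2 = b ^ 2 := by
  have hs : a' ^ 2 + b' ^ 2 = a ^ 2 + b ^ 2 := by
    rw [sq_add_sq_eq_sqrt a' b', sq_add_sq_eq_sqrt a b, hd, mul_pow 2 (a' * b'),
      mul_pow 2 (a * b), hp]
  constructor <;> linarith

theorem sq_eq_of_pairDiff_eq {u u' : Fin 6 → ℝ} (hd : pairDiff u' = pairDiff u)
    (hp : ∀ i, pairProd u' i ^ 2 = pairProd u i ^ 2) (k : Fin 6) : u' k ^ 2 = u k ^ 2 := by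
  have h i := sq_eq_sq_of_sq_sub_sq_eq (congrFun hd i) (hp i)
  fin_cases k
  exacts [(h 0).1, (h 1).1, (h 2).1, (h 2).2, (h 1).2, (h 0).2]

theorem exists_signs_of_sq_eq {a b a' b' σ : ℝ} (hσ : σ = 1 ∨ σ = -1) (ha : a' ^ 2 = a ^ 2)
    (hb : b' ^ 2 = b ^ 2) (hab : a' * b' = σ * (a * b)) :
    ∃ s t : ℝ, (s = 1 ∨ s = -1) ∧ (t = 1 ∨ t = -1) ∧ s * t = σ ∧ a' = s * a ∧ b' = t * b := by
  have sign_of_sq {x y : ℝ} (h : x ^ 2 = y ^ 2) : ∃ s : ℝ, (s = 1 ∨ s = -1) ∧ x = s * y := by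
    rcases sq_eq_sq_iff_eq_or_eq_neg.mp h with h | h
    exacts [⟨1, .inl rfl, by simp [h]⟩, ⟨-1, .inr rfl, by simp [h]⟩]
  obtain ⟨s, hs, rfl⟩ := sign_of_sq ha
  obtain ⟨t, ht, rfl⟩ := sign_of_sq hb
  by_cases ha0 : a = 0
  · refine ⟨σ * t, t, ?_, ht, ?_, by simp [ha0], rfl⟩
    · rcases hσ with rfl | rfl <;> rcases ht with rfl | rfl <;> norm_num
    · rcases ht with rfl | rfl <;> ring
  by_cases hb0 : b = 0
  · refine ⟨s, σ * s, hs, ?_, ?_, rfl, by simp [hb0]⟩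
    · rcases hσ with rfl | rfl <;> rcases hs with rfl | rfl <;> norm_num
    · rcases hs with rfl | rfl <;> ring
  · exact ⟨s, t, hs, ht, mul_right_cancel₀ (mul_ne_zero ha0 hb0) (by linear_combination hab),
      rfl, rfl⟩

theorem exists_signCoef_eq {s : Fin 6 → ℝ} (hs : ∀ k, s k = 1 ∨ s k = -1)
    (h₁ : s 0 * s 5 = s 1 * s 4) (h₂ : s 1 * s 4 = s 2 * s 3) :
    ∃ ε : Fin 4 → ℝ, (∀ i, ε i = 1 ∨ ε i = -1) ∧ ∃ c : ℝ, (c = 1 ∨ c = -1) ∧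
      ∀ k, s k = c * signCoef ε k := by
  have hsq k : s k * s k = 1 := mul_self_eq_one_iff.mpr (hs k)
  obtain ⟨σ, hσ, e3, e4, e5⟩ : ∃ σ : ℝ, (σ = 1 ∨ σ = -1) ∧
      s 3 = σ * s 2 ∧ s 4 = σ * s 1 ∧ s 5 = σ * s 0 := by
    refine ⟨s 0 * s 5, mul_self_eq_one_iff.mp ?_, ?_, ?_, ?_⟩
    · linear_combination (s 5 * s 5) * hsq 0 + hsq 5
    · linear_combination (-s 3) * hsq 2 - s 2 * (h₁.trans h₂)
    · linear_combination (-s 4) * hsq 1 - s 1 * h₁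
    · linear_combination (-s 5) * hsq 0
  refine ⟨![1, σ * s 1 * s 2, σ * s 0 * s 2, σ * s 0 * s 1], fun i => ?_,
    σ * s 0 * s 1 * s 2, ?_, fun k => ?_⟩
  · fin_cases i <;> rcases hσ with h | h <;> rcases hs 0 with h0 | h0 <;>
      rcases hs 1 with h1 | h1 <;> rcases hs 2 with h2 | h2 <;> simp [h, h0, h1, h2]
  · rcases hσ with h | h <;> rcases hs 0 with h0 | h0 <;>
      rcases hs 1 with h1 | h1 <;> rcases hs 2 with h2 | h2 <;> simp [h, h0, h1, h2]
  · fin_cases k <;> rcases hσ with h | h <;> rcases hs 0 with h0 | h0 <;>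
      rcases hs 1 with h1 | h1 <;> rcases hs 2 with h2 | h2 <;>
      simp [signCoef, e3, e4, e5, h, h0, h1, h2]

theorem exists_signCoef_of_sq_eq {u u' : Fin 6 → ℝ} {σ : ℝ} (hσ : σ = 1 ∨ σ = -1)
    (hsq : ∀ k, u' k ^ 2 = u k ^ 2) (hprod : ∀ i, pairProd u' i = σ * pairProd u i) :
    ∃ ε : Fin 4 → ℝ, (∀ i, ε i = 1 ∨ ε i = -1) ∧ ∃ c : ℝ, (c = 1 ∨ c = -1) ∧
      ∀ k, u' k = c * (signCoef ε k * u k) := by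
  choose s t hs ht hst hus hut using fun i =>
    exists_signs_of_sq_eq hσ (hsq (pairLo i)) (hsq (pairHi i)) (hprod i)
  obtain ⟨ε, hε, c, hc, hsc⟩ := exists_signCoef_eq (s := ![s 0, s 1, s 2, t 2, t 1, t 0])
    (fun k => by fin_cases k <;> simp [hs, ht]) (by simp [hst]) (by simp [hst])
  refine ⟨ε, hε, c, hc, fun k => ?_⟩
  rw [← mul_assoc, ← hsc k]
  fin_cases k
  exacts [hus 0, hus 1, hus 2, hut 2, hut 1, hut 0]

theorem exists_signCoef_of_momentMap_eq {u u' : Fin 6 → ℝ} (hu : normSq u = 1)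
    (hu' : normSq u' = 1) (hX : momentMap u' = momentMap u) {l : ℝ}
    (hl : ∀ i, pairProd u' i = l * pairProd u i) :
    ∃ ε : Fin 4 → ℝ, (∀ i, ε i = 1 ∨ ε i = -1) ∧ ∃ c : ℝ, (c = 1 ∨ c = -1) ∧
      ∀ k, u' k = c * (signCoef ε k * u k) := by
  have hw : u ≠ 0 := by rintro rfl; simp [normSq] at hu
  have hw' : u' ≠ 0 := by rintro rfl; simp [normSq] at hu'
  have hd : pairDiff u' = pairDiff u := funext fun i => by
    simpa [octaDiff_momentMap, hw, hw', hu, hu'] using congrFun (congrArg octaDiff hX) i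
  have hsum : ∑ i, √(pairDiff u i ^ 2 + (l * (2 * pairProd u i)) ^ 2) =
      ∑ i, √(pairDiff u i ^ 2 + (2 * pairProd u i) ^ 2) := by
    rw [← normSq_eq_sum_sqrt, hu, ← hu', normSq_eq_sum_sqrt, hd]
    simp only [hl, mul_left_comm]
  obtain ⟨σ, hσ, hσprod⟩ : ∃ σ : ℝ, (σ = 1 ∨ σ = -1) ∧ ∀ i, pairProd u' i = σ * pairProd u i := by
    rcases sq_eq_one_or_eq_zero_of_sum_sqrt_eq hsum with hl1 | h0
    · exact ⟨l, sq_eq_one_iff.mp hl1, hl⟩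
    · refine ⟨1, .inl rfl, fun i => ?_⟩
      have h0i : pairProd u i = 0 := by simpa using congrFun h0 i
      simp [hl, h0i]
  have hσσ : σ ^ 2 = 1 := sq_eq_one_iff.mpr hσ
  exact exists_signCoef_of_sq_eq hσ
    (sq_eq_of_pairDiff_eq hd fun i => by rw [hσprod, mul_pow, hσσ, one_mul]) hσprod

theorem realOrbitRel_mk_of_signCoef {a b : {w : Fin 6 → ℝ // w ≠ 0}} {ε : Fin 4 → ℝ}
    (hε : ∀ i, ε i = 1 ∨ ε i = -1) {c : ℝ} (hc : c ≠ 0)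
    (h : ∀ k, b.1 k = c * (signCoef ε k * a.1 k)) :
    realOrbitRel (Quot.mk _ a) (Quot.mk _ b) := by
  have hne : (fun k => signCoef ε k * a.1 k) ≠ 0 := fun h0 =>
    b.2 (funext fun k => by simp [h k, congrFun h0 k])
  exact ⟨ε, hε, a, ⟨_, hne⟩, rfl, Quot.sound ⟨c, hc, funext fun k => (h k).symm⟩, fun _ => rfl⟩

theorem exists_momentMap_eq {x : Fin 4 → ℝ} (hx : x ∈ hypersimplex) {v : Fin 3 → ℝ}
    (hv : v ≠ 0) : ∃ w : Fin 6 → ℝ, w ≠ 0 ∧ momentMap w = x ∧ ∃ t, ∀ i, pairProd w i = t * v i := by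
  obtain ⟨t, ht⟩ := exists_sum_sqrt_eq_one (d := octaDiff x) (e := fun i => 2 * v i)
    (by simpa [funext_iff] using hv) (sum_abs_octaDiff_le hx)
  choose a b hab hprod using fun i =>
    exists_sq_sub_sq_eq_and_two_mul_eq (octaDiff x i) (t * (2 * v i))
  set w : Fin 6 → ℝ := ![a 0, a 1, a 2, b 2, b 1, b 0]
  have hdiff : pairDiff w = octaDiff x := funext fun i => by fin_cases i <;> exact hab _
  have hprod' (i : Fin 3) : 2 * pairProd w i = t * (2 * v i) := by fin_cases i <;> exact hprod _
  have hN : normSq w = 1 := by rw [normSq_eq_sum_sqrt, hdiff, ← ht]; simp only [hprod']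
  have hw : w ≠ 0 := by rintro h; simp [h, normSq] at hN
  refine ⟨w, hw, eq_of_octaDiff_eq (momentMap_mem hw).2 hx.2 (funext fun i => ?_), t,
    fun i => by linarith [hprod' i]⟩
  rw [octaDiff_momentMap hw, hN, div_one, hdiff]

instance : CompactSpace RP5 := compactSpace_quot_proportional (ι := Fin 6)

instance : CompactSpace RP2 := compactSpace_quot_proportional (ι := Fin 3)

/-- The value at `v = 0` is arbitrary: `pairProd` vanishes only over `∂Δ₄,₂`, where the `ℝP²`
coordinate is collapsed. -/
def toRP2 (v : Fin 3 → ℝ) : RP2 :=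
  if hv : v = 0 then Quot.mk _ ⟨![1, 0, 0], fun h => one_ne_zero (congrFun h 0)⟩
  else Quot.mk _ ⟨v, hv⟩

theorem toRP2_mul {c : ℝ} (hc : c ≠ 0) (v : Fin 3 → ℝ) : toRP2 (fun i => c * v i) = toRP2 v := by
  by_cases hv : v = 0
  · rw [show (fun i => c * v i) = v by simp [hv]; rfl]
  have hcv : (fun i => c * v i) ≠ 0 := fun h => hv (funext fun i => by simpa [hc] using congrFun h i)
  rw [toRP2, dif_neg hcv, toRP2, dif_neg hv]
  exact (Quot.sound ⟨c, hc, rfl⟩).symm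

theorem exists_eq_mul_of_toRP2_eq {v v' : Fin 3 → ℝ} (hv : v ≠ 0) (hv' : v' ≠ 0)
    (h : toRP2 v = toRP2 v') : ∃ l, ∀ i, v' i = l * v i := by
  rw [toRP2, dif_neg hv, toRP2, dif_neg hv', Quot.eq] at h
  obtain ⟨l, -, hl⟩ := (proportional_equivalence (ι := Fin 3)).eqvGen_iff.mp h
  exact ⟨l, fun i => (congrFun hl i).symm⟩

theorem continuousAt_toRP2 {v : Fin 3 → ℝ} (hv : v ≠ 0) : ContinuousAt toRP2 v := by
  refine ContinuousOn.continuousAt ?_ (isOpen_compl_singleton.mem_nhds hv)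
  rw [continuousOn_iff_continuous_domRestrict]
  have : ({0}ᶜ : Set (Fin 3 → ℝ)).domRestrict toRP2 = fun v => Quot.mk _ ⟨v.1, v.2⟩ :=
    funext fun v => dif_neg v.2
  rw [this]
  fun_prop

def glueMap (w : {w : Fin 6 → ℝ // w ≠ 0}) : Quot glueRel :=
  Quot.mk _ (⟨momentMap w.1, momentMap_mem w.2⟩, toRP2 (pairProd w.1))

theorem glueMap_eq_of_signCoef {a b : {w : Fin 6 → ℝ // w ≠ 0}} {ε : Fin 4 → ℝ}
    (hε : ∀ i, ε i = 1 ∨ ε i = -1) {c : ℝ} (hc : c ≠ 0)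
    (h : ∀ k, b.1 k = c * (signCoef ε k * a.1 k)) : glueMap b = glueMap a := by
  have hsq k : b.1 k ^ 2 = c ^ 2 * a.1 k ^ 2 := by
    rw [h k, mul_pow, mul_pow, signCoef_sq hε k, one_mul]
  have hε0 i : ε i ≠ 0 := by rcases hε i with h | h <;> simp [h]
  have hε4 : ε 0 * ε 1 * ε 2 * ε 3 ≠ 0 := by simp [hε0]
  have hP : pairProd b.1 = fun i => c ^ 2 * (ε 0 * ε 1 * ε 2 * ε 3) * pairProd a.1 i :=
    funext (pairProd_eq_of_signCoef h)
  simp only [glueMap, momentMap_eq_of_sq_eq hc hsq, hP,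
    toRP2_mul (mul_ne_zero (pow_ne_zero 2 hc) hε4)]

theorem continuousAt_momentMap {w : Fin 6 → ℝ} (hw : w ≠ 0) : ContinuousAt momentMap w := by
  unfold momentMap
  exact continuousAt_pi.mpr fun j =>
    .div (by fun_prop) continuous_normSq.continuousAt (normSq_pos hw).ne'

theorem continuous_pairProd : Continuous pairProd := by
  unfold pairProd
  fun_prop

theorem continuous_glueMap : Continuous glueMap := by
  have hX : Continuous fun a : {w : Fin 6 → ℝ // w ≠ 0} =>
      (⟨momentMap a.1, momentMap_mem a.2⟩ : hypersimplex) :=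
    .subtype_mk (continuous_iff_continuousAt.mpr fun a =>
      (continuousAt_momentMap a.2).comp continuous_subtype_val.continuousAt) _
  refine continuous_iff_continuousAt.mpr fun a => ?_
  by_cases hP : pairProd a.1 = 0
  · exact continuousAt_quot_mk_of_collapsed hX.continuousAt _ fun _ =>
      Quot.sound (.inr ⟨rfl, (momentMap_mem_hypersimplexBoundary_iff a.2).mpr hP⟩)
  · exact continuous_quot_mk.continuousAt.comp (hX.continuousAt.prodMk
      ((continuousAt_toRP2 hP).comp (f := fun a : {w : Fin 6 → ℝ // w ≠ 0} => pairProd a.1)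
        (continuous_pairProd.comp continuous_subtype_val).continuousAt))

theorem glueRel_equivalence : Equivalence glueRel where
  refl _ := .inl rfl
  symm := by
    rintro p q (rfl | ⟨h, hp⟩)
    exacts [.inl rfl, .inr ⟨h.symm, h ▸ hp⟩]
  trans := by
    rintro p q r (rfl | ⟨h, hp⟩) hqr
    · exact hqr
    · rcases hqr with rfl | ⟨h', -⟩
      exacts [.inr ⟨h, hp⟩, .inr ⟨h.trans h', hp⟩]

def orbitMap : Quot realOrbitRel → Quot glueRel :=
  Quot.lift (Quot.lift glueMap fun _ _ ⟨c, hc, h⟩ =>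
      (glueMap_eq_of_signCoef (ε := 1) (by simp) hc fun k => by simp [← h]).symm)
    fun _ _ ⟨_, hε, _, _, ha, hb, h⟩ => by
      subst ha hb
      exact (glueMap_eq_of_signCoef hε one_ne_zero fun k => by rw [h k, one_mul]).symm

theorem continuous_orbitMap : Continuous orbitMap :=
  continuous_quot_lift _ (continuous_quot_lift _ continuous_glueMap)

theorem momentMap_eq_of_glueMap_eq {a b : {w : Fin 6 → ℝ // w ≠ 0}} (h : glueMap a = glueMap b) :
    momentMap b.1 = momentMap a.1 ∧ ∃ l, ∀ i, pairProd b.1 i = l * pairProd a.1 i := by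
  have hglue : glueRel _ _ := glueRel_equivalence.eqvGen_iff.mp (Quot.eq.mp h)
  have hX : momentMap b.1 = momentMap a.1 := by
    rcases hglue with h | ⟨h, -⟩
    exacts [congrArg (fun p => p.1.1) h.symm, congrArg Subtype.val h.symm]
  refine ⟨hX, ?_⟩
  have hboundary {w : {w : Fin 6 → ℝ // w ≠ 0}} := momentMap_mem_hypersimplexBoundary_iff w.2
  by_cases ha : pairProd a.1 = 0
  · have hb : pairProd b.1 = 0 := hboundary.mp (hX ▸ hboundary.mpr ha)
    exact ⟨0, fun i => by simp [hb]⟩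
  have hb : pairProd b.1 ≠ 0 := fun hb => ha (hboundary.mp (hX ▸ hboundary.mpr hb))
  rcases hglue with h | ⟨-, hbd⟩
  · exact exists_eq_mul_of_toRP2_eq ha hb (congrArg Prod.snd h)
  · exact absurd (hboundary.mp hbd) ha

theorem orbitMap_injective : Function.Injective orbitMap := by
  rintro ⟨⟨a⟩⟩ ⟨⟨b⟩⟩ h
  obtain ⟨u, hu, hua⟩ := exists_proportional_normSq_eq_one a
  obtain ⟨u', hu', hub⟩ := exists_proportional_normSq_eq_one b
  have hua' : Quot.mk projRelR u = Quot.mk projRelR a := Quot.sound hua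
  have hub' : Quot.mk projRelR u' = Quot.mk projRelR b := Quot.sound hub
  rw [← hua', ← hub'] at h ⊢
  obtain ⟨hX, l, hl⟩ := momentMap_eq_of_glueMap_eq h
  obtain ⟨ε, hε, c, hc, hcoef⟩ := exists_signCoef_of_momentMap_eq hu hu' hX hl
  exact Quot.sound (realOrbitRel_mk_of_signCoef hε (by rcases hc with rfl | rfl <;> norm_num) hcoef)

theorem orbitMap_surjective : Function.Surjective orbitMap := by
  rintro ⟨⟨⟨x, hx⟩, ⟨v, hv⟩⟩⟩
  obtain ⟨w, hw, hX, t, ht⟩ := exists_momentMap_eq hx hv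
  refine ⟨Quot.mk _ (Quot.mk _ ⟨w, hw⟩), Quot.sound ?_⟩
  by_cases hP : pairProd w = 0
  · exact .inr ⟨Subtype.ext hX, hX ▸ (momentMap_mem_hypersimplexBoundary_iff hw).mpr hP⟩
  have ht0 : t ≠ 0 := by
    rintro rfl
    exact hP (funext fun i => by simp [ht])
  refine .inl (Prod.ext (Subtype.ext hX) ?_)
  change toRP2 (pairProd w) = _
  rw [show pairProd w = fun i => t * v i from funext ht, toRP2_mul ht0, toRP2, dif_neg hv]

def bump (x : Fin 4 → ℝ) : ℝ := ∏ j, x j * (1 - x j)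

theorem bump_eq_zero_iff {x : Fin 4 → ℝ} : bump x = 0 ↔ ∃ j, x j = 0 ∨ x j = 1 := by
  simp only [bump, prod_eq_zero_iff, mem_univ, true_and, mul_eq_zero, sub_eq_zero, @eq_comm ℝ 1]

def glueEmbedding : Quot glueRel → (Fin 4 → ℝ) × (Fin 3 → Fin 3 → ℝ) :=
  Quot.lift (fun p => (p.1.1, bump p.1.1 • projOuter (ι := Fin 3) p.2)) fun p q h => by
    rcases h with rfl | ⟨hpq, hp⟩
    · rfl
    · have hb : bump p.1.1 = 0 := bump_eq_zero_iff.mpr hp.2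
      rw [← hpq, hb, zero_smul, zero_smul]

theorem continuous_glueEmbedding : Continuous glueEmbedding := by
  have hbump : Continuous bump := by
    unfold bump
    fun_prop
  exact continuous_quot_lift _ (.prodMk (by fun_prop) (.smul
    (hbump.comp (continuous_subtype_val.comp continuous_fst))
    (continuous_projOuter.comp continuous_snd)))

theorem glueEmbedding_injective : Function.Injective glueEmbedding := by
  rintro ⟨x, p⟩ ⟨y, q⟩ h
  obtain ⟨hxy, hpq⟩ := Prod.ext_iff.mp h
  obtain rfl : x = y := Subtype.ext hxy
  refine Quot.sound ?_
  by_cases hx : bump x.1 = 0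
  · exact .inr ⟨rfl, x.2, bump_eq_zero_iff.mp hx⟩
  · exact .inl (Prod.ext rfl (projOuter_injective (smul_right_injective _ hx hpq)))

instance : T2Space (Quot glueRel) :=
  .of_injective_continuous glueEmbedding_injective continuous_glueEmbedding

end

end RP5Orbit

/-- the orbit space `ℝP⁵/ℤ₂⁴` is homeomorphic to `(Δ₄,₂ × ℝP²)/≈`, where `≈`
collapses the `ℝP²`-factor over each boundary point of the octahedron `Δ₄,₂`. -/
theorem RP5_orbitSpace_homeomorph_glued_product :
    Nonempty (Quot realOrbitRel ≃ₜ Quot glueRel) :=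
  ⟨RP5Orbit.continuous_orbitMap.homeoOfEquivCompactToT2
    (f := .ofBijective RP5Orbit.orbitMap
      ⟨RP5Orbit.orbitMap_injective, RP5Orbit.orbitMap_surjective⟩)⟩
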